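/- Let n and k be natural numbers. If T^[t](n) is odd for every t < k, then n ≥ 2^k − 1. -/
import Mathlib


/-- The compact Collatz map: `n / 2` if `n` is even, `(3 n + 1) / 2` if `n` is odd. -/
def T (n : ℕ) : ℕ := if n % 2 = 0 then n / 2 else (3 * n + 1) / 2

lemma key_14 : ∀ k n : ℕ, (∀ t < k, Odd (T^[t] n)) → 2 ^ k ∣ n + 1 := by
  intro k
  induction k with
  | zero => intro n _; simp
  | succ k ih =>
    intro n h
    have hn : Odd n := by simpa using h 0 (by omega)
    obtain ⟨m, hm⟩ := hn
    have hTn : T n = 3 * m + 2 := by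
      have h2 : (2 * m + 1) % 2 = 1 := by omega
      simp only [T, hm, h2]
      norm_num
      omega
    have h' : ∀ t < k, Odd (T^[t] (T n)) := by
      intro t ht
      have := h (t + 1) (by omega)
      simpa [Function.iterate_succ_apply] using this
    have hd : 2 ^ k ∣ 3 * m + 3 := by
      have := ih (T n) h'
      rwa [hTn] at this
    have hd2 : 2 ^ k ∣ 3 * (m + 1) := by
      have : 3 * (m + 1) = 3 * m + 3 := by ring
      rwa [this]
    have hcop : Nat.Coprime (2 ^ k) 3 := Nat.Coprime.pow_left _ (by norm_num)
    have hd3 : 2 ^ k ∣ m + 1 := (Nat.Coprime.dvd_of_dvd_mul_left hcop) hd2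
    have hn1 : n + 1 = 2 * (m + 1) := by omega
    rw [hn1, pow_succ, mul_comm (2 ^ k) 2]
    exact mul_dvd_mul_left 2 hd3

theorem stmt_14 (n k : ℕ) (h : ∀ t < k, Odd (T^[t] n)) :
    n ≥ 2 ^ k - 1 := by
  have hd := key_14 k n h
  have := Nat.le_of_dvd (by omega) hd
  omega
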